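/- For every n ≥ 1, in the group ring ℤ[S_{n+1}] one has ε_{n+1} − ι(ε_n) = (−τ_{n+1} + ι(τ_n)) ∪ ι(ε_n), where ∪ denotes the cup product. -/

import Mathlib

noncomputable section

/-- `permDeg π` is the minimal number of transpositions whose product is `π`. -/
def permDeg {n : ℕ} (π : Equiv.Perm (Fin n)) : ℕ :=
  sInf {d | ∃ l : List (Equiv.Perm (Fin n)),
    (∀ t ∈ l, t.IsSwap) ∧ l.prod = π ∧ l.length = d}

/-- The cup product on the group ring `ℤ[S_n]`, extended bilinearly from
`σ ∪ π = σπ` if `deg σ + deg π = deg (σπ)` and `0` otherwise. -/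
def cup {n : ℕ} (f g : MonoidAlgebra ℤ (Equiv.Perm (Fin n))) :
    MonoidAlgebra ℤ (Equiv.Perm (Fin n)) :=
  f.coeff.sum fun σ a => g.coeff.sum fun π b =>
    if permDeg σ + permDeg π = permDeg (σ * π)
    then MonoidAlgebra.single (σ * π) (a * b) else 0

/-- `tau n` is the sum of all transpositions in `S_n`, as an element of `ℤ[S_n]`. -/
def tau (n : ℕ) : MonoidAlgebra ℤ (Equiv.Perm (Fin n)) :=
  letI := Classical.decPred (Equiv.Perm.IsSwap : Equiv.Perm (Fin n) → Prop)
  ∑ σ ∈ Finset.univ.filter (fun σ : Equiv.Perm (Fin n) => σ.IsSwap),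
    MonoidAlgebra.single σ (1 : ℤ)

/-- `eps n` is the alternating element `Σ_π sgn(π) π` of `ℤ[S_n]`. -/
def eps (n : ℕ) : MonoidAlgebra ℤ (Equiv.Perm (Fin n)) :=
  ∑ π : Equiv.Perm (Fin n),
    MonoidAlgebra.single π ((Equiv.Perm.sign π : ℤˣ) : ℤ)

/-- The standard inclusion `S_n ⊂ S_{n+1}` (permutations fixing the last letter). -/
def iotaPerm (n : ℕ) (π : Equiv.Perm (Fin n)) : Equiv.Perm (Fin (n + 1)) :=
  π.viaFintypeEmbedding Fin.castSuccEmb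

/-- The induced map `ι : ℤ[S_n] → ℤ[S_{n+1}]`. -/
def iota (n : ℕ) (f : MonoidAlgebra ℤ (Equiv.Perm (Fin n))) :
    MonoidAlgebra ℤ (Equiv.Perm (Fin (n + 1))) :=
  MonoidAlgebra.mapDomain (iotaPerm n) f

/-!
Splitting `S_{n+1}` into `ι S_n` and the cosets `(i, n+1) · ι S_n` turns `ε_{n+1} - ι ε_n` into
`-Σ_i Σ_π sgn π · (i, n+1) ι(π)` and `-τ_{n+1} + ι τ_n` into `-Σ_i (i, n+1)`, so the identity
says that each cup product `(i, n+1) ∪ ι(π)` is the ordinary product, i.e. that degrees add.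
They do because `deg σ = m - dim {f : Fin m → ℚ | f ∘ σ = f}` is `m` minus the number of cycles
of `σ`, and left multiplication of `ι(π)`, which fixes `n+1`, by `(i, n+1)` merges two cycles.
-/

open Equiv Equiv.Perm Module

namespace Equiv.Perm

variable (K : Type*) [Field K] {α : Type*}

def fixedFunctions (σ : Perm α) : Submodule K (α → K) where
  carrier := {f | ∀ x, f (σ x) = f x}
  add_mem' hf hg x := by simp [hf x, hg x]
  zero_mem' _ := rfl
  smul_mem' c f hf x := by simp [hf x]

lemma fixedFunctions_inf_le_mul (σ π : Perm α) :
    fixedFunctions K σ ⊓ fixedFunctions K π ≤ fixedFunctions K (σ * π) :=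
  fun _ ⟨hσ, hπ⟩ x => (hσ (π x)).trans (hπ x)

/-- Composing with the swap that puts `x` back in place gains the indicator of `x`. -/
lemma fixedFunctions_lt_swap_mul [DecidableEq α] {σ : Perm α} {x : α} (hx : σ x ≠ x) :
    fixedFunctions K σ < fixedFunctions K (swap x (σ x) * σ) := by
  refine lt_of_le_of_ne (fun f hf y => ?_) fun heq => ?_
  · have hswap : ∀ z, f (swap x (σ x) z) = f z := by
      intro z
      rcases eq_or_ne z x with rfl | hzx
      · simp [hf z]
      rcases eq_or_ne z (σ x) with rfl | hzσ
      · simp [hf x]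
      · rw [swap_apply_of_ne_of_ne hzx hzσ]
    rw [Perm.mul_apply, hswap, hf]
  · have hfix : Pi.single x (1 : K) ∈ fixedFunctions K (swap x (σ x) * σ) := by
      have hxx : (swap x (σ x) * σ) x = x := by simp
      intro y
      rcases eq_or_ne y x with rfl | hyx
      · rw [hxx]
      · rw [Pi.single_eq_of_ne hyx,
          Pi.single_eq_of_ne fun h => hyx ((swap x (σ x) * σ).injective (h.trans hxx.symm))]
    rw [← heq] at hfix
    simpa [hx] using hfix x

variable [Fintype α]

lemma finrank_fixedFunctions_one : finrank K (fixedFunctions K (1 : Perm α)) = Fintype.card α := by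
  rw [show fixedFunctions K (1 : Perm α) = ⊤ from eq_top_iff.mpr fun _ _ _ => rfl,
    finrank_top, finrank_fintype_fun_eq_card]

lemma finrank_fixedFunctions_le (σ : Perm α) :
    finrank K (fixedFunctions K σ) ≤ Fintype.card α :=
  (Submodule.finrank_le _).trans_eq (finrank_fintype_fun_eq_card K)

lemma finrank_fixedFunctions_add_le (σ π : Perm α) :
    finrank K (fixedFunctions K σ) + finrank K (fixedFunctions K π) ≤
      Fintype.card α + finrank K (fixedFunctions K (σ * π)) := by
  have hsup := (Submodule.finrank_le (fixedFunctions K σ ⊔ fixedFunctions K π)).trans_eq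
    (finrank_fintype_fun_eq_card K)
  have hinf := Submodule.finrank_mono (fixedFunctions_inf_le_mul K σ π)
  have := Submodule.finrank_sup_add_finrank_inf_eq (fixedFunctions K σ) (fixedFunctions K π)
  omega

/-- The fixed functions of `swap a b` contain the kernel of the functional `f ↦ f a - f b`. -/
lemma card_le_finrank_fixedFunctions_swap_add_one [DecidableEq α] (a b : α) :
    Fintype.card α ≤ finrank K (fixedFunctions K (swap a b)) + 1 := by
  let φ : (α → K) →ₗ[K] K := LinearMap.proj (R := K) (φ := fun _ : α => K) a - LinearMap.proj b
  have hker : LinearMap.ker φ ≤ fixedFunctions K (swap a b) := by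
    intro f hf x
    have hab : f a = f b := sub_eq_zero.mp hf
    rcases eq_or_ne x a with rfl | hxa
    · simp [hab]
    rcases eq_or_ne x b with rfl | hxb
    · simp [hab]
    · rw [swap_apply_of_ne_of_ne hxa hxb]
  have hrank := LinearMap.finrank_range_add_finrank_ker φ
  have hrange : finrank K (LinearMap.range φ) ≤ 1 :=
    (Submodule.finrank_le _).trans_eq (finrank_self K)
  have := Submodule.finrank_mono hker
  rw [finrank_fintype_fun_eq_card] at hrank
  omega

end Equiv.Perm

section PermDeg

variable {m : ℕ}

lemma exists_isSwap_prod_eq_length_eq_permDeg (σ : Perm (Fin m)) :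
    ∃ l : List (Perm (Fin m)), (∀ t ∈ l, t.IsSwap) ∧ l.prod = σ ∧ l.length = permDeg σ := by
  obtain ⟨l, hprod, hswap⟩ := (truncSwapFactors σ).out
  have hne : {d | ∃ l : List (Perm (Fin m)),
      (∀ t ∈ l, t.IsSwap) ∧ l.prod = σ ∧ l.length = d}.Nonempty :=
    ⟨l.length, l, hswap, hprod, rfl⟩
  exact Nat.sInf_mem hne

lemma permDeg_prod_le_length {l : List (Perm (Fin m))} (hl : ∀ t ∈ l, t.IsSwap) :
    permDeg l.prod ≤ l.length :=
  Nat.sInf_le ⟨l, hl, rfl, rfl⟩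

lemma permDeg_one : permDeg (1 : Perm (Fin m)) = 0 :=
  Nat.le_zero.mp (permDeg_prod_le_length (l := []) nofun)

lemma permDeg_mul_le_of_isSwap {t : Perm (Fin m)} (ht : t.IsSwap) (σ : Perm (Fin m)) :
    permDeg (t * σ) ≤ permDeg σ + 1 := by
  obtain ⟨l, hl, rfl, hlen⟩ := exists_isSwap_prod_eq_length_eq_permDeg σ
  rw [← hlen, ← List.prod_cons, ← List.length_cons]
  exact permDeg_prod_le_length (List.forall_mem_cons (p := IsSwap).mpr ⟨ht, hl⟩)

variable (K : Type*) [Field K]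

lemma card_le_length_add_finrank_fixedFunctions_prod {l : List (Perm (Fin m))}
    (hl : ∀ t ∈ l, t.IsSwap) : m ≤ l.length + finrank K (fixedFunctions K l.prod) := by
  induction l with
  | nil => rw [List.prod_nil, finrank_fixedFunctions_one, Fintype.card_fin]; exact le_add_self
  | cons t l ih =>
    obtain ⟨⟨a, b, -, rfl⟩, hl'⟩ := List.forall_mem_cons.mp hl
    have := ih hl'
    have := card_le_finrank_fixedFunctions_swap_add_one K a b
    have := finrank_fixedFunctions_add_le K (swap a b) l.prod
    have := finrank_fixedFunctions_le K (swap a b * l.prod)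
    rw [Fintype.card_fin] at *
    rw [List.prod_cons, List.length_cons]
    omega

lemma permDeg_add_finrank_fixedFunctions_le (σ : Perm (Fin m)) :
    permDeg σ + finrank K (fixedFunctions K σ) ≤ m := by
  rcases σ.support.eq_empty_or_nonempty with hσ | ⟨x, hx⟩
  · rw [support_eq_empty_iff.mp hσ, permDeg_one, finrank_fixedFunctions_one, Fintype.card_fin,
      zero_add]
  have hσx : σ x ≠ x := mem_support.mp hx
  have := permDeg_add_finrank_fixedFunctions_le (swap x (σ x) * σ)
  have := Submodule.finrank_lt_finrank_of_lt (fixedFunctions_lt_swap_mul K hσx)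
  have := permDeg_mul_le_of_isSwap ⟨x, σ x, hσx.symm, rfl⟩ (swap x (σ x) * σ)
  rw [swap_mul_self_mul] at this
  omega
termination_by σ.support.card
decreasing_by exact card_support_swap_mul hσx

theorem permDeg_add_finrank_fixedFunctions (σ : Perm (Fin m)) :
    permDeg σ + finrank K (fixedFunctions K σ) = m := by
  refine le_antisymm (permDeg_add_finrank_fixedFunctions_le K σ) ?_
  obtain ⟨l, hl, rfl, hlen⟩ := exists_isSwap_prod_eq_length_eq_permDeg σ
  exact hlen ▸ card_le_length_add_finrank_fixedFunctions_prod K hl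

lemma permDeg_swap_mul_add_one {σ : Perm (Fin m)} {x : Fin m} (hx : σ x ≠ x) :
    permDeg (swap x (σ x) * σ) + 1 = permDeg σ := by
  have := permDeg_add_finrank_fixedFunctions ℚ σ
  have := permDeg_add_finrank_fixedFunctions ℚ (swap x (σ x) * σ)
  have := Submodule.finrank_lt_finrank_of_lt (fixedFunctions_lt_swap_mul ℚ hx)
  have := permDeg_mul_le_of_isSwap ⟨x, σ x, hx.symm, rfl⟩ (swap x (σ x) * σ)
  rw [swap_mul_self_mul] at this
  omega

lemma permDeg_swap {a b : Fin m} (hab : a ≠ b) : permDeg (swap a b) = 1 := by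
  have := permDeg_swap_mul_add_one (σ := swap a b) (x := a) (by simpa using hab.symm)
  rwa [swap_apply_left, swap_mul_self, permDeg_one, zero_add, eq_comm] at this

theorem permDeg_swap_mul_of_apply_eq {π : Perm (Fin m)} {x y : Fin m} (hπ : π x = x)
    (hyx : y ≠ x) : permDeg (swap y x) + permDeg π = permDeg (swap y x * π) := by
  have hσ : (swap y x * π) x = y := by simp [hπ]
  have := permDeg_swap_mul_add_one (σ := swap y x * π) (x := x) (by rwa [hσ])
  rw [hσ, swap_comm, swap_mul_self_mul] at this
  rw [permDeg_swap hyx]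
  omega

lemma permDeg_eq_zero_iff {σ : Perm (Fin m)} : permDeg σ = 0 ↔ σ = 1 := by
  refine ⟨fun h => ?_, fun h => h ▸ permDeg_one⟩
  obtain ⟨l, -, rfl, hlen⟩ := exists_isSwap_prod_eq_length_eq_permDeg σ
  rw [h, List.length_eq_zero_iff] at hlen
  rw [hlen, List.prod_nil]

lemma permDeg_eq_one_iff {σ : Perm (Fin m)} : permDeg σ = 1 ↔ σ.IsSwap := by
  refine ⟨fun h => ?_, fun ⟨a, b, hab, hσ⟩ => hσ ▸ permDeg_swap hab⟩
  obtain ⟨l, hl, rfl, hlen⟩ := exists_isSwap_prod_eq_length_eq_permDeg σ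
  obtain ⟨t, rfl⟩ := List.length_eq_one_iff.mp (hlen.trans h)
  simpa using hl

end PermDeg

section Inclusion

variable {n : ℕ}

lemma iotaPerm_last (π : Perm (Fin n)) : iotaPerm n π (Fin.last n) = Fin.last n :=
  viaFintypeEmbedding_apply_notMem_range _ _ (by simp [Fin.range_castSucc])

lemma iotaPerm_eq_one_iff {π : Perm (Fin n)} : iotaPerm n π = 1 ↔ π = 1 :=
  extendDomain_eq_one_iff

lemma iotaPerm_injective : Function.Injective (iotaPerm n) :=
  extendDomainHom_injective _

lemma sign_iotaPerm (π : Perm (Fin n)) : sign (iotaPerm n π) = sign π :=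
  viaFintypeEmbedding_sign π _

lemma isSwap_iotaPerm_iff {π : Perm (Fin n)} : (iotaPerm n π).IsSwap ↔ π.IsSwap := by
  rw [← card_support_eq_two, ← card_support_eq_two, iotaPerm, viaFintypeEmbedding,
    card_support_extend_domain]

lemma isSwap_swap_mul_iotaPerm_iff (i : Fin n) (π : Perm (Fin n)) :
    (swap i.castSucc (Fin.last n) * iotaPerm n π).IsSwap ↔ π = 1 := by
  have hi := (Fin.castSucc_lt_last i).ne
  rw [← permDeg_eq_one_iff, ← permDeg_swap_mul_of_apply_eq (iotaPerm_last π) hi,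
    permDeg_swap hi, add_eq_left, permDeg_eq_zero_iff, iotaPerm_eq_one_iff]

/-- The inverse reads `j` off as the image of `last n`. -/
lemma bijective_swap_last_mul_iotaPerm :
    Function.Bijective fun p : Fin (n + 1) × Perm (Fin n) =>
      swap p.1 (Fin.last n) * iotaPerm n p.2 := by
  refine (Fintype.bijective_iff_injective_and_card _).mpr ⟨fun ⟨j, π⟩ ⟨j', π'⟩ h => ?_, ?_⟩
  · have hj : j = j' := by simpa [iotaPerm_last] using congr($h (Fin.last n))
    subst hj
    simpa using iotaPerm_injective (mul_left_cancel h)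
  · simp [Fintype.card_perm, Nat.factorial_succ]

lemma sum_perm_fin_succ {M : Type*} [AddCommMonoid M] (f : Perm (Fin (n + 1)) → M) :
    ∑ σ, f σ = ∑ π, f (iotaPerm n π) +
      ∑ i : Fin n, ∑ π, f (swap i.castSucc (Fin.last n) * iotaPerm n π) := by
  rw [← (Equiv.ofBijective _ bijective_swap_last_mul_iotaPerm).sum_comp, Fintype.sum_prod_type,
    Fin.sum_univ_castSucc, add_comm]
  simp [swap_self, ← Perm.one_def]

end Inclusion

section GroupRing

open MonoidAlgebra

variable {m n : ℕ}

lemma iota_sum {ι : Type*} (s : Finset ι) (F : ι → MonoidAlgebra ℤ (Perm (Fin n))) :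
    iota n (∑ i ∈ s, F i) = ∑ i ∈ s, iota n (F i) :=
  map_sum (mapDomainLinearMap ℤ ℤ (iotaPerm n)) F s

lemma cup_single_single (σ π : Perm (Fin m)) (a b : ℤ) :
    cup (single σ a) (single π b) =
      if permDeg σ + permDeg π = permDeg (σ * π) then single (σ * π) (a * b) else 0 := by
  simp [cup, coeff_single]

lemma cup_add_left (f f' g : MonoidAlgebra ℤ (Perm (Fin m))) :
    cup (f + f') g = cup f g + cup f' g := by
  unfold cup
  rw [coeff_add, Finsupp.sum_add_index' (fun _ => by simp) fun σ a a' => ?_]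
  rw [← Finsupp.sum_add]
  refine Finsupp.sum_congr fun π _ => ?_
  split_ifs
  · rw [add_mul, single_add]
  · rw [add_zero]

lemma cup_add_right (f g g' : MonoidAlgebra ℤ (Perm (Fin m))) :
    cup f (g + g') = cup f g + cup f g' := by
  unfold cup
  rw [← Finsupp.sum_add]
  refine Finsupp.sum_congr fun σ _ => ?_
  rw [coeff_add, Finsupp.sum_add_index' (fun _ => by simp) fun π b b' => ?_]
  split_ifs
  · rw [mul_add, single_add]
  · rw [add_zero]

lemma cup_sum_left {ι : Type*} (s : Finset ι) (F : ι → MonoidAlgebra ℤ (Perm (Fin m)))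
    (g : MonoidAlgebra ℤ (Perm (Fin m))) : cup (∑ i ∈ s, F i) g = ∑ i ∈ s, cup (F i) g :=
  map_sum (AddMonoidHom.mk' (cup · g) (cup_add_left · · g)) F s

lemma cup_sum_right {ι : Type*} (s : Finset ι) (f : MonoidAlgebra ℤ (Perm (Fin m)))
    (G : ι → MonoidAlgebra ℤ (Perm (Fin m))) : cup f (∑ i ∈ s, G i) = ∑ i ∈ s, cup f (G i) :=
  map_sum (AddMonoidHom.mk' (cup f) (cup_add_right f)) G s

lemma iota_eps : iota n (eps n) = ∑ π, single (iotaPerm n π) ((sign π : ℤˣ) : ℤ) := by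
  rw [eps, iota_sum]
  simp [iota]

lemma eps_succ : eps (n + 1) = iota n (eps n) + ∑ i : Fin n, ∑ π,
    single (swap i.castSucc (Fin.last n) * iotaPerm n π) (-((sign π : ℤˣ) : ℤ)) := by
  rw [eps, sum_perm_fin_succ, iota_eps]
  simp [sign_iotaPerm, (Fin.castSucc_lt_last _).ne]

lemma tau_succ : tau (n + 1) = iota n (tau n) +
    ∑ i : Fin n, single (swap i.castSucc (Fin.last n)) (1 : ℤ) := by
  classical
  simp only [tau, Finset.sum_filter]
  rw [sum_perm_fin_succ, iota_sum]
  simp_rw [apply_ite (iota n), iota, mapDomain_single, mapDomain_zero, isSwap_iotaPerm_iff,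
    isSwap_swap_mul_iotaPerm_iff, Finset.sum_ite_eq', Finset.mem_univ, if_true,
    iotaPerm_eq_one_iff.mpr rfl, mul_one]

end GroupRing

theorem eps_succ_sub_iota_eps_general (n : ℕ) :
    eps (n + 1) - iota n (eps n) =
      cup (-tau (n + 1) + iota n (tau n)) (iota n (eps n)) := by
  have htau : -tau (n + 1) + iota n (tau n) =
      ∑ i : Fin n, MonoidAlgebra.single (swap i.castSucc (Fin.last n)) (-1 : ℤ) := by
    rw [tau_succ, neg_add_rev, neg_add_cancel_right, ← Finset.sum_neg_distrib]
    simp_rw [MonoidAlgebra.single_neg]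
  rw [htau, eps_succ, add_sub_cancel_left, iota_eps, cup_sum_left]
  refine Finset.sum_congr rfl fun i _ => ?_
  rw [cup_sum_right]
  refine Finset.sum_congr rfl fun π _ => ?_
  rw [cup_single_single, if_pos (permDeg_swap_mul_of_apply_eq (iotaPerm_last π)
    (Fin.castSucc_lt_last i).ne), neg_one_mul]

/-- For every `n ≥ 1`, in `ℤ[S_{n+1}]` one has
`ε_{n+1} − ι(ε_n) = (−τ_{n+1} + ι(τ_n)) ∪ ι(ε_n)`. -/
theorem eps_succ_sub_iota_eps (n : ℕ) (hn : 1 ≤ n) :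
    eps (n + 1) - iota n (eps n) =
      cup (-tau (n + 1) + iota n (tau n)) (iota n (eps n)) :=
  eps_succ_sub_iota_eps_general n

end
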